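/- If two fully-commutative words in the 0-Hecke monoid have reverse words that are equivalent under the micro-moves (Knuth moves, weak Knuth moves, and the Hecke move), then they have the same insertion tableau under *-insertion (inserting letters from right to left). -/

import Mathlib

/-- One elementary relation of the 0-Hecke monoid applied somewhere inside a word
(letters are positive integers; `p + 1 < q ∨ q + 1 < p` encodes `|p - q| > 1`). -/
inductive HeckeStep : List ℕ → List ℕ → Prop
  | comm (u v : List ℕ) (p q : ℕ) (hpq : p + 1 < q ∨ q + 1 < p) :
      HeckeStep (u ++ p :: q :: v) (u ++ q :: p :: v)
  | braid (u v : List ℕ) (p q : ℕ) :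
      HeckeStep (u ++ p :: q :: p :: v) (u ++ q :: p :: q :: v)
  | idem (u v : List ℕ) (p : ℕ) :
      HeckeStep (u ++ p :: p :: v) (u ++ p :: v)

/-- 0-Hecke equivalence of words. -/
def HeckeEquiv : List ℕ → List ℕ → Prop := Relation.EqvGen HeckeStep

/-- A word contains a consecutive braid subword `i (i+1) i` or `(i+1) i (i+1)`
(the latter is the form `i (i-1) i`). -/
def ContainsBraid (w : List ℕ) : Prop :=
  ∃ (u v : List ℕ) (i : ℕ),
    w = u ++ i :: (i+1) :: i :: v ∨ w = u ++ (i+1) :: i :: (i+1) :: v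

/-- A word is fully-commutative if no 0-Hecke equivalent word contains a
consecutive braid subword. -/
def FullyCommutative (w : List ℕ) : Prop :=
  ∀ w', HeckeEquiv w w' → ¬ ContainsBraid w'

/-- Micro-moves on 0-Hecke words: Knuth moves (I1), (I2), weak Knuth moves
(II1), (II2), and the Hecke move (III), applied to three consecutive letters. -/
inductive MicroStep : List ℕ → List ℕ → Prop
  | knuth1 (u v : List ℕ) (x y z : ℕ) (h1 : x < z) (h2 : z < y) :
      MicroStep (u ++ x :: y :: z :: v) (u ++ y :: x :: z :: v)
  | knuth2 (u v : List ℕ) (x y z : ℕ) (h1 : x < z) (h2 : z < y) :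
      MicroStep (u ++ z :: x :: y :: v) (u ++ z :: y :: x :: v)
  | weak1 (u v : List ℕ) (x y : ℕ) (h : x + 1 < y) :
      MicroStep (u ++ x :: y :: y :: v) (u ++ y :: x :: y :: v)
  | weak2 (u v : List ℕ) (x y : ℕ) (h : x + 1 < y) :
      MicroStep (u ++ x :: x :: y :: v) (u ++ x :: y :: x :: v)
  | heckeIII (u v : List ℕ) (x : ℕ) :
      MicroStep (u ++ x :: x :: (x+1) :: v) (u ++ x :: (x+1) :: (x+1) :: v)

/-- The equivalence relation generated by the micro-moves. -/
def MicroEquiv : List ℕ → List ℕ → Prop := Relation.EqvGen MicroStep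

/-- The smallest entry of `R` that is larger than `x` (junk value `0` if none). -/
def minGT (R : List ℕ) (x : ℕ) : ℕ := ((R.filter (fun y => x < y)).min?).getD 0

/-- The smallest `y ≤ x` such that the whole interval `[y, x]` is contained in `R`. -/
noncomputable def intervalMin (R : List ℕ) (x : ℕ) : ℕ :=
  sInf {y | y ≤ x ∧ ∀ z, y ≤ z → z ≤ x → z ∈ R}

/-- `⋆`-insertion of a letter `x` into a single row `R`: returns the new row and
the letter (if any) bumped into the next row.  Case 1: if `R` is empty or
`x > max R`, append `x`.  Case 3: if `x ∈ R`, leave `R` unchanged and bump the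
smallest `y` with `[y,x] ⊆ R`.  Case 2: otherwise replace the smallest `y > x`
by `x` and bump `y`. -/
noncomputable def insertRow (R : List ℕ) (x : ℕ) : List ℕ × Option ℕ :=
  if ∀ y ∈ R, y < x then (R ++ [x], none)
  else if x ∈ R then (R, some (intervalMin R x))
  else (R.map (fun y => if y = minGT R x then x else y), some (minGT R x))

/-- `⋆`-insertion of a letter into a tableau, whose rows are listed bottom row
first (French notation). -/
noncomputable def insertTab : List (List ℕ) → ℕ → List (List ℕ)
  | [], x => [[x]]
  | R :: rest, x =>
    match (insertRow R x).2 with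
    | none => (insertRow R x).1 :: rest
    | some y => (insertRow R x).1 :: insertTab rest y

/-- The row reading word: rows are read from the top row down (French notation),
each row from left to right. -/
def rowWord (T : List (List ℕ)) : List ℕ := T.reverse.flatten

/-- `T` (rows listed bottom row first) is a tableau with strictly increasing rows
whose transpose is semistandard: rows are nonempty with weakly decreasing lengths
going up, rows strictly increase, and columns weakly increase going up. -/
def TransposeSSYT (T : List (List ℕ)) : Prop :=
  (∀ R ∈ T, R ≠ []) ∧
  List.Chain' (fun a b => b ≤ a) (T.map List.length) ∧
  (∀ R ∈ T, List.Chain' (· < ·) R) ∧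
  (∀ r c, r + 1 < T.length → c < (T.getD (r+1) []).length →
    (T.getD r []).getD c 0 ≤ (T.getD (r+1) []).getD c 0)

/-- `T` (rows listed bottom row first) is a semistandard Young tableau: rows are
nonempty with weakly decreasing lengths going up, rows weakly increase, and
columns strictly increase going up. -/
def IsSSYT (T : List (List ℕ)) : Prop :=
  (∀ R ∈ T, R ≠ []) ∧
  List.Chain' (fun a b => b ≤ a) (T.map List.length) ∧
  (∀ R ∈ T, List.Chain' (· ≤ ·) R) ∧
  (∀ r c, r + 1 < T.length → c < (T.getD (r+1) []).length →
    (T.getD r []).getD c 0 < (T.getD (r+1) []).getD c 0)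

/-- The `⋆`-insertion tableau of a word, the letters being inserted from right
to left. -/
noncomputable def starPTab (w : List ℕ) : List (List ℕ) :=
  w.reverse.foldl insertTab []

/-!
Insert both sides of a micro-move, row by row. In a row `R` (strictly increasing, viewed as a
set) a letter `x` is appended, or already lies in `R` and bumps the least `y` with `[y, x] ⊆ R`,
or bumps the least entry larger than `x`. Following these cases for the three letters
shows that both sides produce the same new row, while their bumped words are equal or again differ
by one micro-move; so the rows above receive related words, and induction over the rows concludes.
Full commutativity is used only to exclude inserting `x` into a row that contains `x` and `x + 1`,
and it passes to the bumped words because each insertion is a 0-Hecke equivalence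
`R ++ [x] ≡ bumped ++ R'`.
-/

theorem Relation.EqvGen.map {α β : Type*} {r : α → α → Prop} {s : β → β → Prop} (f : α → β)
    (hf : ∀ a b, r a b → s (f a) (f b)) {a b : α} (h : Relation.EqvGen r a b) :
    Relation.EqvGen s (f a) (f b) := by
  induction h with
  | rel a b hab => exact .rel _ _ (hf a b hab)
  | refl a => exact .refl _
  | symm a b _ ih => exact .symm _ _ ih
  | trans a b c _ _ ih₁ ih₂ => exact .trans _ _ _ ih₁ ih₂

section Hecke

variable {u v w w' : List ℕ}

theorem HeckeStep.append_left (u : List ℕ) (h : HeckeStep w w') : HeckeStep (u ++ w) (u ++ w') := by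
  cases h with
  | comm a b p q hpq => simpa using HeckeStep.comm (u ++ a) b p q hpq
  | braid a b p q => simpa using HeckeStep.braid (u ++ a) b p q
  | idem a b p => simpa using HeckeStep.idem (u ++ a) b p

theorem HeckeStep.append_right (v : List ℕ) (h : HeckeStep w w') :
    HeckeStep (w ++ v) (w' ++ v) := by
  cases h with
  | comm a b p q hpq => simpa using HeckeStep.comm a (b ++ v) p q hpq
  | braid a b p q => simpa using HeckeStep.braid a (b ++ v) p q
  | idem a b p => simpa using HeckeStep.idem a (b ++ v) p

theorem HeckeStep.reverse (h : HeckeStep w w') : HeckeStep w.reverse w'.reverse := by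
  cases h with
  | comm a b p q hpq => simpa using HeckeStep.comm b.reverse a.reverse q p (by omega)
  | braid a b p q => simpa using HeckeStep.braid b.reverse a.reverse p q
  | idem a b p => simpa using HeckeStep.idem b.reverse a.reverse p

theorem HeckeEquiv.refl (w : List ℕ) : HeckeEquiv w w := Relation.EqvGen.refl w

theorem HeckeEquiv.symm (h : HeckeEquiv w w') : HeckeEquiv w' w := Relation.EqvGen.symm _ _ h

theorem HeckeEquiv.trans {w'' : List ℕ} (h : HeckeEquiv w w') (h' : HeckeEquiv w' w'') :
    HeckeEquiv w w'' :=
  Relation.EqvGen.trans _ _ _ h h'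

theorem HeckeEquiv.append_left (u : List ℕ) (h : HeckeEquiv w w') :
    HeckeEquiv (u ++ w) (u ++ w') :=
  Relation.EqvGen.map (u ++ ·) (fun _ _ hs => hs.append_left u) h

theorem HeckeEquiv.append_right (v : List ℕ) (h : HeckeEquiv w w') :
    HeckeEquiv (w ++ v) (w' ++ v) :=
  Relation.EqvGen.map (· ++ v) (fun _ _ hs => hs.append_right v) h

theorem HeckeEquiv.reverse (h : HeckeEquiv w w') : HeckeEquiv w.reverse w'.reverse :=
  Relation.EqvGen.map List.reverse (fun _ _ hs => hs.reverse) h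

theorem heckeEquiv_idem (u v : List ℕ) (x : ℕ) : HeckeEquiv (u ++ x :: x :: v) (u ++ x :: v) :=
  .rel _ _ (.idem u v x)

theorem heckeEquiv_comm_block (u B v : List ℕ) (x : ℕ) (hB : ∀ b ∈ B, x + 1 < b ∨ b + 1 < x) :
    HeckeEquiv (u ++ B ++ x :: v) (u ++ x :: (B ++ v)) := by
  induction B generalizing u with
  | nil => simpa using HeckeEquiv.refl (u ++ x :: v)
  | cons b B ih =>
    have h₁ : HeckeEquiv (u ++ b :: B ++ x :: v) (u ++ b :: x :: (B ++ v)) := by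
      simpa using ih (u ++ [b]) fun c hc => hB c (List.mem_cons_of_mem _ hc)
    exact h₁.trans (.rel _ _ (.comm u (B ++ v) b x (by have := hB b List.mem_cons_self; omega)))

theorem ContainsBraid.append_left (u : List ℕ) (h : ContainsBraid w) : ContainsBraid (u ++ w) := by
  obtain ⟨a, b, i, h | h⟩ := h
  · exact ⟨u ++ a, b, i, Or.inl (by simp [h])⟩
  · exact ⟨u ++ a, b, i, Or.inr (by simp [h])⟩

theorem ContainsBraid.append_right (v : List ℕ) (h : ContainsBraid w) : ContainsBraid (w ++ v) := by
  obtain ⟨a, b, i, h | h⟩ := h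
  · exact ⟨a, b ++ v, i, Or.inl (by simp [h])⟩
  · exact ⟨a, b ++ v, i, Or.inr (by simp [h])⟩

theorem ContainsBraid.reverse (h : ContainsBraid w) : ContainsBraid w.reverse := by
  obtain ⟨a, b, i, h | h⟩ := h
  · exact ⟨b.reverse, a.reverse, i, Or.inl (by simp [h])⟩
  · exact ⟨b.reverse, a.reverse, i, Or.inr (by simp [h])⟩

theorem FullyCommutative.of_heckeEquiv (hw : FullyCommutative w) (h : HeckeEquiv w w') :
    FullyCommutative w' :=
  fun z hz => hw z (h.trans hz)

theorem FullyCommutative.of_append_left (h : FullyCommutative (u ++ v)) : FullyCommutative u :=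
  fun w hw hbr => h (w ++ v) (hw.append_right v) (hbr.append_right v)

theorem FullyCommutative.of_append_right (h : FullyCommutative (u ++ v)) : FullyCommutative v :=
  fun w hw hbr => h (u ++ w) (hw.append_left u) (hbr.append_left u)

theorem FullyCommutative.reverse (h : FullyCommutative w) : FullyCommutative w.reverse :=
  fun z hz hbr => h z.reverse (by simpa using hz.reverse) hbr.reverse

end Hecke

section IntervalMin

variable {R S : List ℕ} {x t v : ℕ}

theorem intervalMin_spec (hx : x ∈ R) :
    intervalMin R x ≤ x ∧ ∀ v, intervalMin R x ≤ v → v ≤ x → v ∈ R :=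
  Nat.sInf_mem (s := {y | y ≤ x ∧ ∀ z, y ≤ z → z ≤ x → z ∈ R})
    ⟨x, le_rfl, fun _ h1 h2 => le_antisymm h2 h1 ▸ hx⟩

theorem intervalMin_le (hx : x ∈ R) : intervalMin R x ≤ x := (intervalMin_spec hx).1

theorem mem_of_intervalMin_le (hx : x ∈ R) (h1 : intervalMin R x ≤ v) (h2 : v ≤ x) : v ∈ R :=
  (intervalMin_spec hx).2 v h1 h2

theorem intervalMin_le_of_forall_mem (ht : t ≤ x) (h : ∀ v, t ≤ v → v ≤ x → v ∈ R) :
    intervalMin R x ≤ t :=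
  Nat.sInf_le ⟨ht, h⟩

theorem lt_intervalMin (hx : x ∈ R) (ht : t ≤ x) (htR : t ∉ R) : t < intervalMin R x :=
  not_le.1 fun h => htR (mem_of_intervalMin_le hx h ht)

theorem intervalMin_eq (ht : t ≤ x) (hrun : ∀ v, t ≤ v → v ≤ x → v ∈ R)
    (hgap : ∀ v, v + 1 = t → v ∉ R) : intervalMin R x = t := by
  have hx : x ∈ R := hrun x ht le_rfl
  refine le_antisymm (intervalMin_le_of_forall_mem ht hrun) (not_lt.1 fun hlt => ?_)
  exact hgap (t - 1) (by omega) (mem_of_intervalMin_le hx (by omega) (by omega))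

theorem intervalMin_self (hx : x ∈ R) (hgap : ∀ v, v + 1 = x → v ∉ R) : intervalMin R x = x :=
  intervalMin_eq le_rfl (fun _ h1 h2 => le_antisymm h2 h1 ▸ hx) hgap

theorem intervalMin_congr (ht : t ≤ x) (htR : t ∉ R) (htS : t ∉ S)
    (h : ∀ v, t < v → v ≤ x → (v ∈ R ↔ v ∈ S)) : intervalMin R x = intervalMin S x := by
  unfold intervalMin
  congr 1
  ext y
  simp only [Set.mem_ofPred_eq]
  refine and_congr_right fun hy => ⟨fun hR v h1 h2 => ?_, fun hS v h1 h2 => ?_⟩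
  · have : t < y := not_le.1 fun h' => htR (hR t h' ht)
    exact (h v (by omega) h2).1 (hR v h1 h2)
  · have : t < y := not_le.1 fun h' => htS (hS t h' ht)
    exact (h v (by omega) h2).2 (hS v h1 h2)

theorem intervalMin_congr_of_le (h : ∀ v ≤ x, v ∈ R ↔ v ∈ S) :
    intervalMin R x = intervalMin S x := by
  unfold intervalMin
  congr 1
  ext y
  simp only [Set.mem_ofPred_eq]
  exact and_congr_right fun _ => forall_congr' fun v => imp_congr_right fun _ =>
    imp_congr_right fun hv => h v hv

theorem notMem_of_succ_eq_intervalMin (hx : x ∈ R) (hv : v + 1 = intervalMin R x) : v ∉ R :=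
  fun hvR => by
    have := intervalMin_le_of_forall_mem (R := R) (t := v) (by have := intervalMin_le hx; omega)
      fun u h1 h2 => (Nat.eq_or_lt_of_le h1).elim (fun h => h ▸ hvR)
        fun h => mem_of_intervalMin_le hx (by omega) h2
    omega

theorem intervalMin_eq_of_intervalMin_le {y : ℕ} (hy : y ∈ R) (hxy : x ≤ y)
    (h : intervalMin R y ≤ x) : intervalMin R x = intervalMin R y :=
  intervalMin_eq h (fun _ h1 h2 => mem_of_intervalMin_le hy h1 (le_trans h2 hxy))
    fun _ hv => notMem_of_succ_eq_intervalMin hy hv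

end IntervalMin

section InsertRow

variable {R S U : List ℕ} {b c m n t v w x y : ℕ}

theorem insertRow_of_forall_lt (h : ∀ r ∈ R, r < x) : insertRow R x = (R ++ [x], none) :=
  if_pos h

theorem insertRow_of_mem (h : x ∈ R) : insertRow R x = (R, some (intervalMin R x)) := by
  have : ¬ ∀ r ∈ R, r < x := fun hall => lt_irrefl x (hall x h)
  simp [insertRow, this, h]

theorem minGT_eq_of_isLeast (h : IsLeast {r | r ∈ R ∧ x < r} m) : minGT R x = m := by
  have hmin : (R.filter (x < ·)).min? = some m := by
    refine List.min?_eq_some_iff.2 ⟨List.mem_filter.2 ⟨h.1.1, by simpa using h.1.2⟩, ?_⟩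
    intro b hb
    obtain ⟨hbR, hxb⟩ := List.mem_filter.1 hb
    exact h.2 ⟨hbR, by simpa using hxb⟩
  simp [minGT, hmin]

theorem insertRow_of_isLeast (hx : x ∉ R) (h : IsLeast {r | r ∈ R ∧ x < r} m) :
    insertRow R x = (R.map (fun r => if r = m then x else r), some m) := by
  have : ¬ ∀ r ∈ R, r < x := fun hall => lt_asymm h.1.2 (hall m h.1.1)
  simp [insertRow, this, hx, minGT_eq_of_isLeast h]

theorem exists_isLeast_of_lt (hr : t ∈ R) (hxt : x < t) :
    ∃ m, IsLeast {r | r ∈ R ∧ x < r} m := by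
  have hne : (R.filter (x < ·)).min? ≠ none := by
    simp only [ne_eq, List.min?_eq_none_iff, List.filter_eq_nil_iff]
    exact fun h => h t hr (by simpa using hxt)
  obtain ⟨m, hm⟩ := Option.ne_none_iff_exists'.1 hne
  obtain ⟨hmf, hlb⟩ := List.min?_eq_some_iff.1 hm
  obtain ⟨hmR, hxm⟩ := List.mem_filter.1 hmf
  exact ⟨m, ⟨hmR, by simpa using hxm⟩,
    fun r hr => hlb r (List.mem_filter.2 ⟨hr.1, by simpa using hr.2⟩)⟩

theorem mem_map_ite_eq (hm : m ∈ R) :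
    v ∈ R.map (fun r => if r = m then x else r) ↔ v = x ∨ (v ∈ R ∧ v ≠ m) := by
  simp only [List.mem_map]
  constructor
  · rintro ⟨r, hr, rfl⟩
    by_cases h : r = m <;> simp_all
  · rintro (rfl | ⟨hv, hvm⟩)
    · exact ⟨m, hm, by simp⟩
    · exact ⟨v, hv, by simp [hvm]⟩

theorem pairwise_map_ite_eq (hR : R.Pairwise (· < ·)) (hx : x ∉ R)
    (h : IsLeast {r | r ∈ R ∧ x < r} m) :
    (R.map (fun r => if r = m then x else r)).Pairwise (· < ·) := by
  rw [List.pairwise_map]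
  refine hR.imp_of_mem fun {a b} ha hb hab => ?_
  have below : ∀ r ∈ R, r < m → r < x := fun r hr hrm => by
    rcases lt_trichotomy r x with h' | rfl | h'
    · exact h'
    · exact absurd hr hx
    · exact absurd (h.2 ⟨hr, h'⟩) (not_le.2 hrm)
  split_ifs with h1 h2 h2
  · omega
  · subst h1; exact lt_trans h.1.2 hab
  · subst h2; exact below a ha hab
  · exact hab

theorem insertRow_cases (R : List ℕ) (x : ℕ) :
    ((∀ r ∈ R, r < x) ∧ insertRow R x = (R ++ [x], none)) ∨
    (x ∈ R ∧ insertRow R x = (R, some (intervalMin R x))) ∨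
    (x ∉ R ∧ ∃ m, IsLeast {r | r ∈ R ∧ x < r} m ∧
      insertRow R x = (R.map (fun r => if r = m then x else r), some m)) := by
  by_cases hall : ∀ r ∈ R, r < x
  · exact Or.inl ⟨hall, insertRow_of_forall_lt hall⟩
  by_cases hx : x ∈ R
  · exact Or.inr (Or.inl ⟨hx, insertRow_of_mem hx⟩)
  push Not at hall
  obtain ⟨t, ht, hxt⟩ := hall
  obtain ⟨m, hm⟩ := exists_isLeast_of_lt ht (lt_of_le_of_ne hxt fun h => hx (h ▸ ht))
  exact Or.inr (Or.inr ⟨hx, m, hm, insertRow_of_isLeast hx hm⟩)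

theorem insertRow_pairwise (hR : R.Pairwise (· < ·)) (x : ℕ) :
    (insertRow R x).1.Pairwise (· < ·) := by
  rcases insertRow_cases R x with ⟨hall, e⟩ | ⟨_, e⟩ | ⟨hx, m, hm, e⟩ <;> rw [e]
  · exact List.pairwise_append.2 ⟨hR, List.pairwise_singleton _ _, by simpa using hall⟩
  · exact hR
  · exact pairwise_map_ite_eq hR hx hm

theorem mem_insertRow_self (R : List ℕ) (x : ℕ) : x ∈ (insertRow R x).1 := by
  rcases insertRow_cases R x with ⟨_, e⟩ | ⟨hx, e⟩ | ⟨_, m, hm, e⟩ <;> rw [e]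
  · simp
  · exact hx
  · exact (mem_map_ite_eq hm.1.1).2 (Or.inl rfl)

theorem mem_insertRow_of_lt (hv : v < x) : v ∈ (insertRow R x).1 ↔ v ∈ R := by
  rcases insertRow_cases R x with ⟨_, e⟩ | ⟨_, e⟩ | ⟨_, m, hm, e⟩ <;> rw [e]
  · simp [hv.ne]
  · rw [mem_map_ite_eq hm.1.1]
    have : v ≠ m := by have := hm.1.2; omega
    simp [hv.ne, this]

theorem mem_of_mem_insertRow (hv : v ∈ (insertRow R x).1) : v = x ∨ v ∈ R := by
  rcases insertRow_cases R x with ⟨_, e⟩ | ⟨_, e⟩ | ⟨_, m, hm, e⟩ <;> rw [e] at hv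
  · simp at hv; tauto
  · exact Or.inr hv
  · rw [mem_map_ite_eq hm.1.1] at hv; tauto

theorem succ_notMem_insertRow (hx : x ∈ R → x + 1 ∉ R) : x + 1 ∉ (insertRow R x).1 := by
  rcases insertRow_cases R x with ⟨hall, e⟩ | ⟨hxR, e⟩ | ⟨_, m, hm, e⟩ <;> rw [e]
  · simpa using fun h => absurd (hall _ h) (by omega)
  · exact hx hxR
  · rw [mem_map_ite_eq hm.1.1]
    rintro (h | ⟨h, hne⟩)
    · omega
    · have := hm.2 ⟨h, Nat.lt_succ_self x⟩; have := hm.1.2; omega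

theorem mem_of_insertRow_snd (ht : (insertRow R x).2 = some t) : t ∈ R := by
  rcases insertRow_cases R x with ⟨_, e⟩ | ⟨hx, e⟩ | ⟨_, m, hm, e⟩ <;> rw [e] at ht <;>
    cases ht
  · exact mem_of_intervalMin_le hx le_rfl (intervalMin_le hx)
  · exact hm.1.1

theorem isLeast_of_insertRow_snd (hx : x ∉ R) (ht : (insertRow R x).2 = some t) :
    IsLeast {r | r ∈ R ∧ x < r} t := by
  rcases insertRow_cases R x with ⟨_, e⟩ | ⟨hx', _⟩ | ⟨_, m, hm, e⟩
  · rw [e] at ht; cases ht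
  · exact absurd hx' hx
  · rw [e] at ht; cases ht; exact hm

theorem exists_insertRow_snd_le_intervalMin (hy : y ∈ R) (hcy : c ≤ y) :
    ∃ t, (insertRow R c).2 = some t ∧ t ≤ intervalMin R y := by
  rcases insertRow_cases R c with ⟨hall, _⟩ | ⟨hc, e⟩ | ⟨hc, m, hm, e⟩
  · exact absurd (hall y hy) (not_lt.2 hcy)
  · refine ⟨_, by rw [e], ?_⟩
    by_cases h : intervalMin R y ≤ c
    · exact (intervalMin_eq_of_intervalMin_le hy hcy h).le
    · exact le_trans (intervalMin_le hc) (le_of_not_ge h)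
  · refine ⟨m, by rw [e], hm.2 ⟨mem_of_intervalMin_le hy le_rfl (intervalMin_le hy), ?_⟩⟩
    exact lt_of_not_ge fun h => hc (mem_of_intervalMin_le hy h hcy)

theorem lt_of_insertRow_snd (hb : b ∉ R) (h : ∀ v ∈ R, c ≤ v → b < v)
    (ht : (insertRow R c).2 = some t) : b < t := by
  rcases insertRow_cases R c with ⟨_, e⟩ | ⟨hc, e⟩ | ⟨_, m, hm, e⟩ <;> rw [e] at ht <;>
    cases ht
  · exact lt_intervalMin hc (h c hc le_rfl).le hb
  · exact h _ hm.1.1 hm.1.2.le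

theorem isLeast_congr (h : ∀ r, x < r → (r ∈ R ↔ r ∈ S)) (hm : IsLeast {r | r ∈ R ∧ x < r} m) :
    IsLeast {r | r ∈ S ∧ x < r} m := by
  have : {r | r ∈ R ∧ x < r} = {r | r ∈ S ∧ x < r} :=
    Set.ext fun r => and_congr_left fun hr => h r hr
  rwa [← this]

theorem mem_map_ite_eq_of_lt (hm : IsLeast {r | r ∈ R ∧ x < r} m) (hv : m < v) :
    v ∈ R.map (fun r => if r = m then x else r) ↔ v ∈ R := by
  rw [mem_map_ite_eq hm.1.1]
  have := hm.1.2
  constructor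
  · rintro (rfl | ⟨h, -⟩)
    · omega
    · exact h
  · exact fun h => Or.inr ⟨h, by omega⟩

theorem lt_of_mem_map_ite_eq (hm : IsLeast {r | r ∈ R ∧ x < r} m)
    (hv : v ∈ R.map (fun r => if r = m then x else r)) (hxv : x < v) : m < v := by
  rcases (mem_map_ite_eq hm.1.1).1 hv with rfl | ⟨hv, hne⟩
  · omega
  · exact lt_of_le_of_ne (hm.2 ⟨hv, hxv⟩) (Ne.symm hne)

theorem notMem_map_ite_eq (hm : IsLeast {r | r ∈ R ∧ x < r} m) :
    m ∉ R.map (fun r => if r = m then x else r) :=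
  fun h => lt_irrefl m (lt_of_mem_map_ite_eq hm h hm.1.2)

theorem exists_insertRow_snd_le_of_insertRow_eq (h : insertRow S y = (U, some w)) (hcy : c ≤ y) :
    ∃ t, (insertRow U c).2 = some t ∧ t ≤ w := by
  have hyU : y ∈ U := by simpa [h] using mem_insertRow_self S y
  obtain ⟨t, ht, htρ⟩ := exists_insertRow_snd_le_intervalMin hyU hcy
  refine ⟨t, ht, le_trans htρ ?_⟩
  by_cases hy : y ∈ S
  · rw [insertRow_of_mem hy] at h
    cases h
    exact le_rfl
  · have := (isLeast_of_insertRow_snd hy (by rw [h])).1.2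
    have := intervalMin_le hyU
    omega

theorem map_ite_eq_of_notMem (h : m ∉ R) : R.map (fun r => if r = m then x else r) = R :=
  (List.map_congr_left fun r hr => if_neg fun e : r = m => h (e ▸ hr)).trans R.map_id

theorem intervalMin_map_ite_eq (hm : IsLeast {r | r ∈ S ∧ x < r} m) (hy : y ∈ S)
    (hρ : m + 1 < intervalMin S y) :
    intervalMin (S.map (fun r => if r = m then x else r)) y = intervalMin S y := by
  have hgap : intervalMin S y - 1 ∉ S := notMem_of_succ_eq_intervalMin hy (by omega)
  have hT := fun v => mem_map_ite_eq_of_lt (v := v) hm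
  exact intervalMin_congr (by have := intervalMin_le hy; omega)
    (fun h => hgap ((hT _ (by omega)).1 h)) hgap fun v hv _ => hT v (by omega)

theorem insertRow_comm_of_isLeast_of_isLeast (hx : x ∉ S) (hm : IsLeast {r | r ∈ S ∧ x < r} m)
    (hy : y ∉ S) (hn : IsLeast {r | r ∈ S ∧ y < r} n) (hmy : m < y) :
    ∃ U, insertRow (S.map (fun r => if r = m then x else r)) y = (U, some n) ∧
      insertRow (S.map (fun r => if r = n then y else r)) x = (U, some m) := by
  have hxm := hm.1.2
  have hyn := hn.1.2
  have hT := fun v => mem_map_ite_eq_of_lt (v := v) hm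
  have hmem := fun v => mem_map_ite_eq (x := y) (v := v) hn.1.1
  have hxS' : x ∉ S.map (fun r => if r = n then y else r) := fun h =>
    ((hmem x).1 h).elim (by omega) fun h => hx h.1
  have hmS' : IsLeast {r | r ∈ S.map (fun r => if r = n then y else r) ∧ x < r} m :=
    ⟨⟨(hmem m).2 (Or.inr ⟨hm.1.1, by omega⟩), hxm⟩, fun r ⟨hr, hxr⟩ =>
      ((hmem r).1 hr).elim (fun h => by omega) fun h => hm.2 ⟨h.1, hxr⟩⟩
  refine ⟨_, insertRow_of_isLeast (fun h => hy ((hT y hmy).1 h))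
    (isLeast_congr (fun r hr => (hT r (by omega)).symm) hn), ?_⟩
  rw [insertRow_of_isLeast hxS' hmS', List.map_map, List.map_map]
  refine Prod.ext (List.map_congr_left fun r _ => ?_) rfl
  simp only [Function.comp_apply]
  split_ifs <;> omega

theorem insertRow_comm_of_isLeast (hx : x ∉ S) (hm : IsLeast {r | r ∈ S ∧ x < r} m) (hmy : m < y)
    (hrun : y ∈ S → m + 1 < intervalMin S y) :
    ∃ U, insertRow (insertRow S x).1 y = (U, (insertRow S y).2) ∧
      insertRow (insertRow S y).1 x = (U, some m) := by
  have hxm := hm.1.2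
  rw [insertRow_of_isLeast hx hm]
  rcases insertRow_cases S y with ⟨hall, e⟩ | ⟨hy, e⟩ | ⟨hy, n, hn, e⟩ <;> rw [e]
  · have hm' : IsLeast {r | r ∈ S ++ [y] ∧ x < r} m :=
      ⟨⟨by simp [hm.1.1], hxm⟩, fun r ⟨hr, hxr⟩ => (List.mem_append.1 hr).elim
        (fun hr => hm.2 ⟨hr, hxr⟩) fun hr => by simp at hr; omega⟩
    refine ⟨_, insertRow_of_forall_lt fun r hr => ?_, ?_⟩
    · exact ((mem_map_ite_eq hm.1.1).1 hr).elim (by omega) fun h => hall r h.1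
    · rw [insertRow_of_isLeast (by simp [hx]; omega) hm']
      simp [hmy.ne']
  · refine ⟨_, ?_, insertRow_of_isLeast hx hm⟩
    rw [insertRow_of_mem ((mem_map_ite_eq_of_lt hm hmy).2 hy),
      intervalMin_map_ite_eq hm hy (hrun hy)]
  · exact insertRow_comm_of_isLeast_of_isLeast hx hm hy hn hmy

theorem insertRow_insertRow_of_mem (hx : x ∈ S) (hxy : x < y) :
    insertRow (insertRow S y).1 x = ((insertRow S y).1, some (intervalMin S x)) := by
  have hmem : ∀ v ≤ x, v ∈ (insertRow S y).1 ↔ v ∈ S := fun v hv => mem_insertRow_of_lt (by omega)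
  rw [insertRow_of_mem ((hmem x le_rfl).2 hx), intervalMin_congr_of_le hmem]

end InsertRow

section RowHecke

variable {R : List ℕ} {x m : ℕ}

theorem FullyCommutative.succ_notMem {s : List ℕ} (hR : R.Pairwise (· < ·))
    (h : FullyCommutative (R ++ x :: s)) (hx : x ∈ R) : x + 1 ∉ R := by
  intro hx1
  obtain ⟨C, E, rfl⟩ := List.append_of_mem hx
  obtain ⟨-, hxE, hCE⟩ := List.pairwise_append.1 hR
  have hx1E : x + 1 ∈ E := by
    rcases List.mem_append.1 hx1 with h | h
    · have := hCE _ h x List.mem_cons_self; omega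
    · exact (List.mem_cons.1 h).resolve_left (by omega)
  obtain ⟨F, D, rfl⟩ := List.append_of_mem hx1E
  obtain ⟨hxFD, hFD⟩ := List.pairwise_cons.1 hxE
  obtain ⟨-, hD, hF⟩ := List.pairwise_append.1 hFD
  have hF : F = [] := List.eq_nil_iff_forall_not_mem.2 fun f hf => by
    have := hxFD f (by simp [hf])
    have := hF f hf (x + 1) List.mem_cons_self
    omega
  subst hF
  have e := heckeEquiv_comm_block (C ++ [x, x + 1]) D s x fun d hd =>
    Or.inl ((List.pairwise_cons.1 hD).1 d hd)
  exact (h.of_heckeEquiv (by simpa using e)) _ (.refl _) ⟨C, D ++ s, x, Or.inl (by simp)⟩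

theorem heckeEquiv_append_of_mem (hR : R.Pairwise (· < ·)) (hx : x ∈ R) (hx1 : x + 1 ∉ R) :
    HeckeEquiv (R ++ [x]) R := by
  obtain ⟨C, D, rfl⟩ := List.append_of_mem hx
  have hD : ∀ d ∈ D, x + 1 < d := fun d hd =>
    lt_of_le_of_ne (List.pairwise_cons.1 (List.pairwise_append.1 hR).2.1 |>.1 d hd)
      fun h => hx1 (by simp [h, hd])
  have e : HeckeEquiv (C ++ x :: D ++ [x]) (C ++ x :: x :: D) := by
    simpa using heckeEquiv_comm_block (C ++ [x]) D [] x fun d hd => Or.inl (hD d hd)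
  exact e.trans (heckeEquiv_idem C D x)

theorem heckeEquiv_cons_intervalMin (hR : R.Pairwise (· < ·)) (hx : x ∈ R) :
    HeckeEquiv (intervalMin R x :: R) R := by
  have hy := mem_of_intervalMin_le hx le_rfl (intervalMin_le hx)
  obtain ⟨A, E, hAE⟩ := List.append_of_mem hy
  have hA : ∀ a ∈ A, a + 1 < intervalMin R x := fun a ha => by
    have h₁ : a < intervalMin R x :=
      (List.pairwise_append.1 (hAE ▸ hR)).2.2 a ha _ List.mem_cons_self
    have h₂ : a + 1 ≠ intervalMin R x := fun h =>
      notMem_of_succ_eq_intervalMin hx h (hAE ▸ List.mem_append_left _ ha)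
    omega
  generalize intervalMin R x = y at hA hAE ⊢
  subst hAE
  have e := heckeEquiv_comm_block [] A (y :: E) y fun a ha => Or.inr (hA a ha)
  simpa using e.symm.trans (heckeEquiv_idem A E y)

theorem heckeEquiv_append_of_isLeast (hR : R.Pairwise (· < ·)) (hx : x ∉ R)
    (hm : IsLeast {r | r ∈ R ∧ x < r} m) :
    HeckeEquiv (R ++ [x]) (m :: R.map (fun r => if r = m then x else r)) := by
  obtain ⟨A, B, rfl⟩ := List.append_of_mem hm.1.1
  obtain ⟨-, hmB, hAB⟩ := List.pairwise_append.1 hR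
  have hB : ∀ b ∈ B, m < b := (List.pairwise_cons.1 hmB).1
  have hA : ∀ a ∈ A, a < x := fun a ha => by
    have ham := hAB a ha m List.mem_cons_self
    by_contra h
    have := hm.2 ⟨by simp [ha], lt_of_le_of_ne (not_lt.1 h) fun e => hx (by simp [e, ha])⟩
    omega
  have hmap : (A ++ m :: B).map (fun r => if r = m then x else r) = A ++ x :: B := by
    simp [map_ite_eq_of_notMem fun h => lt_irrefl m (hB m h),
      map_ite_eq_of_notMem fun h => by have := hA m h; have := hm.1.2; omega]
  have hxm := hm.1.2
  have e₁ := heckeEquiv_comm_block (A ++ [m]) B [] x fun b hb => Or.inl (by have := hB b hb; omega)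
  have e₂ := heckeEquiv_comm_block [] A (x :: B) m fun a ha => Or.inr (by have := hA a ha; omega)
  rw [hmap]
  simpa using e₁.trans (by simpa using e₂)

theorem heckeEquiv_insertRow (hR : R.Pairwise (· < ·)) (hx : x ∈ R → x + 1 ∉ R) :
    HeckeEquiv (R ++ [x]) ((insertRow R x).2.toList ++ (insertRow R x).1) := by
  rcases insertRow_cases R x with ⟨-, e⟩ | ⟨hxR, e⟩ | ⟨hxR, m, hm, e⟩ <;> rw [e]
  · simpa using HeckeEquiv.refl _
  · exact (heckeEquiv_append_of_mem hR hxR (hx hxR)).trans (heckeEquiv_cons_intervalMin hR hxR).symm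
  · exact heckeEquiv_append_of_isLeast hR hxR hm

end RowHecke

inductive MicroMove : List ℕ → List ℕ → Prop
  | knuth1 {x y z : ℕ} (h1 : x < z) (h2 : z < y) : MicroMove [x, y, z] [y, x, z]
  | knuth2 {x y z : ℕ} (h1 : x < z) (h2 : z < y) : MicroMove [z, x, y] [z, y, x]
  | weak1 {x y : ℕ} (h : x + 1 < y) : MicroMove [x, y, y] [y, x, y]
  | weak2 {x y : ℕ} (h : x + 1 < y) : MicroMove [x, x, y] [x, y, x]
  | hecke (x : ℕ) : MicroMove [x, x, x + 1] [x, x + 1, x + 1]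

noncomputable def rowInsert : List ℕ → List ℕ → List ℕ × List ℕ
  | R, [] => (R, [])
  | R, x :: s => ((rowInsert (insertRow R x).1 s).1,
      (insertRow R x).2.toList ++ (rowInsert (insertRow R x).1 s).2)

def RowInsertRel (p q : List ℕ × List ℕ) : Prop :=
  p.1 = q.1 ∧ (p.2 = q.2 ∨ MicroMove p.2 q.2 ∨ MicroMove q.2 p.2)

section RowInsert

variable {R R₁ R₂ R₃ s s' : List ℕ} {a b c : ℕ} {o₁ o₂ o₃ : Option ℕ}

theorem rowInsert_cons_of_eq (h : insertRow R a = (R₁, o₁)) :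
    rowInsert R (a :: s) = ((rowInsert R₁ s).1, o₁.toList ++ (rowInsert R₁ s).2) := by
  rw [rowInsert, h]

theorem rowInsert_pair (h₁ : insertRow R a = (R₁, o₁)) (h₂ : insertRow R₁ b = (R₂, o₂)) :
    rowInsert R [a, b] = (R₂, o₁.toList ++ o₂.toList) := by
  rw [rowInsert_cons_of_eq h₁, rowInsert_cons_of_eq h₂]
  simp [rowInsert]

theorem rowInsert_triple (h₁ : insertRow R a = (R₁, o₁)) (h₂ : insertRow R₁ b = (R₂, o₂))
    (h₃ : insertRow R₂ c = (R₃, o₃)) :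
    rowInsert R [a, b, c] = (R₃, o₁.toList ++ o₂.toList ++ o₃.toList) := by
  rw [rowInsert_cons_of_eq h₁, rowInsert_cons_of_eq h₂, rowInsert_cons_of_eq h₃]
  simp [rowInsert]

theorem rowInsert_append_singleton (s : List ℕ) (R : List ℕ) (c : ℕ) :
    rowInsert R (s ++ [c]) = ((insertRow (rowInsert R s).1 c).1,
      (rowInsert R s).2 ++ (insertRow (rowInsert R s).1 c).2.toList) := by
  induction s generalizing R with
  | nil => simp [rowInsert]
  | cons a s ih => simp [rowInsert, ih]

theorem length_rowInsert_snd_le (R s : List ℕ) : (rowInsert R s).2.length ≤ s.length := by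
  induction s generalizing R with
  | nil => simp [rowInsert]
  | cons x s ih =>
    have := ih (insertRow R x).1
    have : (insertRow R x).2.toList.length ≤ 1 := by cases (insertRow R x).2 <;> simp
    simp only [rowInsert, List.length_append, List.length_cons]
    omega

theorem heckeEquiv_rowInsert (hR : R.Pairwise (· < ·)) (h : FullyCommutative (R ++ s)) :
    HeckeEquiv (R ++ s) ((rowInsert R s).2 ++ (rowInsert R s).1) := by
  induction s generalizing R with
  | nil => simpa [rowInsert] using HeckeEquiv.refl R
  | cons x s ih =>
    have e := (heckeEquiv_insertRow hR (h.succ_notMem hR)).append_right s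
    rw [List.append_assoc, List.append_assoc] at e
    have ih' := ih (insertRow_pairwise hR x) ((h.of_heckeEquiv (by simpa using e)).of_append_right)
    simpa [rowInsert] using
      (by simpa using e : HeckeEquiv (R ++ x :: s) _).trans (ih'.append_left _)

theorem MicroMove.heckeEquiv (h : MicroMove s s') : HeckeEquiv s s' := by
  cases h with
  | knuth1 h₁ h₂ => exact .rel _ _ (.comm [] [_] _ _ (by omega))
  | knuth2 h₁ h₂ => exact .rel _ _ (.comm [_] [] _ _ (by omega))
  | weak1 h => exact .rel _ _ (.comm [] [_] _ _ (by omega))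
  | weak2 h => exact .rel _ _ (.comm [_] [] _ _ (by omega))
  | hecke x => exact (heckeEquiv_idem [] [x + 1] x).trans (heckeEquiv_idem [x] [] (x + 1)).symm

theorem MicroMove.length_eq (h : MicroMove s s') : s.length = 3 ∧ s'.length = 3 := by
  cases h <;> simp

end RowInsert

-- The bounds on `a` and `w` are what the letter bumped by a preceding `z` needs to complete
-- `[a, w]` and `[w, a]` to a micro-move (`rowInsertRel_cons_of_swapOutcome`).
def SwapOutcome (S : List ℕ) (z : ℕ) (p q : List ℕ × List ℕ) : Prop :=
  p.1 = q.1 ∧ (p.2 = q.2 ∨ ∃ a w, p.2 = [a, w] ∧ q.2 = [w, a] ∧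
    a ≤ intervalMin S z ∧ z + 1 < w ∧ w ∈ S)

section SwapOutcome

variable {R S U : List ℕ} {a x y z : ℕ}

theorem swapOutcome_of_cons {o : Option ℕ} (ha : a ≤ intervalMin S z)
    (ho : ∀ w, o = some w → z + 1 < w ∧ w ∈ S) :
    SwapOutcome S z (U, a :: o.toList) (U, o.toList ++ [a]) := by
  refine ⟨rfl, ?_⟩
  cases o with
  | none => exact Or.inl rfl
  | some w => exact Or.inr ⟨a, w, rfl, rfl, ha, ho w rfl⟩

theorem rowInsertRel_cons_of_swapOutcome {p q : List ℕ}
    (h : SwapOutcome (insertRow R z).1 z (rowInsert (insertRow R z).1 p)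
      (rowInsert (insertRow R z).1 q)) :
    RowInsertRel (rowInsert R (z :: p)) (rowInsert R (z :: q)) := by
  obtain ⟨hrow, heq | ⟨a, w, hp, hq, ha, hw, hwS⟩⟩ := h
  · exact ⟨hrow, Or.inl (by simp [rowInsert, heq])⟩
  refine ⟨hrow, Or.inr (Or.inl ?_)⟩
  simp only [rowInsert, hp, hq]
  rcases insertRow_cases R z with ⟨hall, e⟩ | ⟨hz, e⟩ | ⟨hz, m, hm, e⟩ <;>
    rw [e] at ha hwS ⊢
  · rcases List.mem_append.1 hwS with h | h
    · exact absurd (hall w h) (by omega)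
    · simp at h; omega
  · have := intervalMin_le hz
    rcases ha.eq_or_lt with rfl | hlt
    · exact .weak2 (by omega)
    · exact .knuth2 hlt (by omega)
  · have hzS := mem_insertRow_self R z
    rw [e] at hzS
    have := intervalMin_le hzS
    exact .knuth2 (by have := hm.1.2; omega) (lt_of_mem_map_ite_eq hm hwS (by omega))

theorem swapOutcome_succ (hx : x ∈ S) (hx1 : x + 1 ∉ S) :
    SwapOutcome S x (rowInsert S [x, x + 1]) (rowInsert S [x + 1, x + 1]) := by
  have hS₂ : ∀ v ≤ x, v ∈ (insertRow S (x + 1)).1 ↔ v ∈ S :=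
    fun v hv => mem_insertRow_of_lt (by omega)
  have hx1' := mem_insertRow_self S (x + 1)
  have hρ : intervalMin (insertRow S (x + 1)).1 (x + 1) = intervalMin S x := by
    rw [← intervalMin_congr_of_le hS₂]
    refine (intervalMin_eq_of_intervalMin_le hx1' (by omega)
      (intervalMin_le_of_forall_mem (by omega) fun v h1 h2 => ?_)).symm
    rcases (by omega : v = x ∨ v = x + 1) with rfl | rfl
    · exact (hS₂ v le_rfl).2 hx
    · exact hx1'
  have hw : ∀ w, (insertRow S (x + 1)).2 = some w → x + 1 < w ∧ w ∈ S := fun w hw =>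
    ⟨lt_of_insertRow_snd hx1 (fun v hv h => lt_of_le_of_ne h fun h' => hx1 (h' ▸ hv)) hw,
      mem_of_insertRow_snd hw⟩
  rcases h : insertRow S (x + 1) with ⟨S₂, o⟩
  rw [h] at hx1' hρ hw
  rw [rowInsert_pair (insertRow_of_mem hx) h,
    rowInsert_pair h (by rw [insertRow_of_mem hx1', hρ])]
  exact swapOutcome_of_cons le_rfl hw

theorem swapOutcome_swap (hz : z ∈ S) (hz1 : z + 1 ∉ S) (hxz : x ≤ z) (hzy : z < y) :
    SwapOutcome S z (rowInsert S [x, y]) (rowInsert S [y, x]) := by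
  have hw : ∀ w, (insertRow S y).2 = some w → z + 1 < w ∧ w ∈ S := fun w hw =>
    ⟨lt_of_insertRow_snd hz1 (fun v hv h => lt_of_le_of_ne (by omega) fun h' => hz1 (h' ▸ hv)) hw,
      mem_of_insertRow_snd hw⟩
  by_cases hx : x ∈ S
  · have ha : intervalMin S x ≤ intervalMin S z := by
      by_cases h : intervalMin S z ≤ x
      · exact (intervalMin_eq_of_intervalMin_le hz hxz h).le
      · exact le_trans (intervalMin_le hx) (by omega)
    rw [rowInsert_pair (insertRow_of_mem hx) Prod.mk.eta.symm,
      rowInsert_pair Prod.mk.eta.symm (insertRow_insertRow_of_mem hx (by omega))]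
    exact swapOutcome_of_cons ha hw
  · have hxz' : x < z := lt_of_le_of_ne hxz fun h => hx (h ▸ hz)
    obtain ⟨m, hm⟩ := exists_isLeast_of_lt hz hxz'
    have hmz : m ≤ z := hm.2 ⟨hz, hxz'⟩
    have ha : m ≤ intervalMin S z :=
      hm.2 ⟨mem_of_intervalMin_le hz le_rfl (intervalMin_le hz), lt_intervalMin hz hxz hx⟩
    obtain ⟨U, hL, hR⟩ := insertRow_comm_of_isLeast (y := y) hx hm (by omega) fun hy => by
      have := lt_intervalMin hy (by omega : z + 1 ≤ y) hz1; omega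
    rw [insertRow_of_isLeast hx hm] at hL
    rw [rowInsert_pair (insertRow_of_isLeast hx hm) hL, rowInsert_pair Prod.mk.eta.symm hR]
    exact swapOutcome_of_cons ha hw

end SwapOutcome

section SwapThen

variable {R U X : List ℕ} {a c m n t w x y : ℕ}

theorem rowInsertRel_of_lt_of_le (hat : a < t) (htw : t ≤ w) (haw : a + 1 < w) :
    RowInsertRel (U, [a, w, t]) (U, [w, a, t]) := by
  refine ⟨rfl, Or.inr (Or.inl ?_)⟩
  rcases htw.lt_or_eq with h | rfl
  · exact .knuth1 hat h
  · exact .weak1 haw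

theorem insertRow_absorb_of_forall_lt (hall : ∀ r ∈ X, r < y) (hX : ∀ v ∈ X, x < v → y < v)
    (hxy : x + 1 < y) (hxc : x < c) (hcy : c ≤ y) :
    insertRow (X ++ [y]) c = ((insertRow X c).1, some y) ∧ (insertRow X c).2 = none := by
  have hallc : ∀ r ∈ X, r < c := fun r hr =>
    lt_of_not_ge fun h => absurd (hall r hr) (not_lt.2 (hX r hr (by omega)).le)
  rw [insertRow_of_forall_lt hallc]
  refine ⟨?_, rfl⟩
  rcases hcy.lt_or_eq with hcy | rfl
  · have hl : IsLeast {r | r ∈ X ++ [y] ∧ c < r} y := ⟨⟨by simp, hcy⟩, fun r ⟨hr, hcr⟩ =>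
      (List.mem_append.1 hr).elim (fun hr => absurd (hallc r hr) (by omega))
        fun hr => by simp at hr; omega⟩
    have hcX : c ∉ X ++ [y] := fun h => (List.mem_append.1 h).elim
      (fun h => lt_irrefl c (hallc c h)) fun h => by simp at h; omega
    rw [insertRow_of_isLeast hcX hl]
    simp [map_ite_eq_of_notMem fun h => lt_irrefl y (hall y h)]
  · rw [insertRow_of_mem (by simp), intervalMin_self (by simp) fun v hv h =>
      (List.mem_append.1 h).elim (fun h => by have := hX v h (by omega); omega)
        fun h => by simp at h; omega]

theorem insertRow_absorb_of_isLeast (hn : IsLeast {r | r ∈ X ∧ y < r} n)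
    (hX : ∀ v ∈ X, x < v → y < v) (hxy : x + 1 < y) (hxc : x < c) (hcy : c ≤ y) :
    insertRow (X.map (fun r => if r = n then y else r)) c = ((insertRow X c).1, some y) ∧
      (insertRow X c).2 = some n := by
  have hyX : y ∉ X := fun h => lt_irrefl y (hX y h (by omega))
  have hcX : c ∉ X := fun h => by have := hX c h hxc; omega
  have hnc : IsLeast {r | r ∈ X ∧ c < r} n := by
    have : {r | r ∈ X ∧ c < r} = {r | r ∈ X ∧ y < r} := Set.ext fun r =>
      ⟨fun ⟨hr, hcr⟩ => ⟨hr, hX r hr (by omega)⟩, fun ⟨hr, hyr⟩ => ⟨hr, by omega⟩⟩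
    rwa [this]
  rw [insertRow_of_isLeast hcX hnc]
  refine ⟨?_, rfl⟩
  have hmem := fun v => mem_map_ite_eq (x := y) (v := v) hn.1.1
  rcases hcy.lt_or_eq with hcy | rfl
  · have hl : IsLeast {r | r ∈ X.map (fun r => if r = n then y else r) ∧ c < r} y :=
      ⟨⟨(hmem y).2 (Or.inl rfl), hcy⟩, fun r ⟨hr, hcr⟩ =>
        ((hmem r).1 hr).elim (fun h => h.ge) fun h => (hX r h.1 (by omega)).le⟩
    rw [insertRow_of_isLeast (fun h => ((hmem c).1 h).elim (by omega) fun h => hcX h.1) hl,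
      List.map_map]
    refine Prod.ext (List.map_congr_left fun r hr => ?_) rfl
    have hry : r ≠ y := fun h => hyX (h ▸ hr)
    by_cases hrn : r = n <;> simp [hrn, hry]
  · rw [insertRow_of_mem ((hmem c).2 (Or.inl rfl)), intervalMin_self ((hmem c).2 (Or.inl rfl))
      fun v hv h => ((hmem v).1 h).elim (by omega) fun h => by have := hX v h.1 (by omega); omega]

theorem insertRow_absorb (hX : ∀ v ∈ X, x < v → y < v) (hxy : x + 1 < y) (hxc : x < c)
    (hcy : c ≤ y) :
    insertRow (insertRow X y).1 c = ((insertRow X c).1, some y) ∧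
      (insertRow X c).2 = (insertRow X y).2 := by
  rcases insertRow_cases X y with ⟨hall, e⟩ | ⟨hy, -⟩ | ⟨-, n, hn, e⟩
  · rw [e]
    exact insertRow_absorb_of_forall_lt hall hX hxy hxc hcy
  · exact absurd (hX y hy (by omega)) (lt_irrefl y)
  · rw [e]
    exact insertRow_absorb_of_isLeast hn hX hxy hxc hcy

-- The cases where `x y` and `y x` leave different rows, `(insertRow X y).1` and `X`: the last
-- letter `c` bumps `y` from the first and makes both rows agree.
theorem rowInsertRel_of_absorb {u : List ℕ} (hX : ∀ v ∈ X, x < v → y < v) (hxy : x + 1 < y)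
    (hxc : x < c) (hcy : c ≤ y)
    (hL : rowInsert R [x, y] = ((insertRow X y).1, u ++ (insertRow X y).2.toList))
    (hR : rowInsert R [y, x] = (X, u ++ [y]))
    (hmove : ∀ n, (insertRow X y).2 = some n → MicroMove (u ++ [y, n]) (u ++ [n, y])) :
    RowInsertRel (rowInsert R [x, y, c]) (rowInsert R [y, x, c]) := by
  obtain ⟨h₁, h₂⟩ := insertRow_absorb hX hxy hxc hcy
  rw [show [x, y, c] = [x, y] ++ [c] from rfl, show [y, x, c] = [y, x] ++ [c] from rfl,
    rowInsert_append_singleton, rowInsert_append_singleton, hL, hR]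
  refine ⟨by simp [h₁], ?_⟩
  simp only [h₁, h₂]
  cases ho : (insertRow X y).2 with
  | none => simp
  | some n => exact Or.inr (Or.inr (by simpa using hmove n ho))

theorem rowInsertRel_swap_then_of_forall_lt (hall : ∀ r ∈ R, r < x) (hxy : x + 1 < y)
    (hxc : x < c) (hcy : c ≤ y) :
    RowInsertRel (rowInsert R [x, y, c]) (rowInsert R [y, x, c]) := by
  have hallx : ∀ r ∈ R ++ [x], r < y := fun r hr => by
    rcases List.mem_append.1 hr with hr | hr
    · have := hall r hr; omega
    · simp at hr; omega
  have hl : IsLeast {r | r ∈ R ++ [y] ∧ x < r} y := ⟨⟨by simp, by omega⟩, fun r ⟨hr, hxr⟩ => by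
    rcases List.mem_append.1 hr with hr | hr
    · exact absurd (hall r hr) (by omega)
    · simp at hr; omega⟩
  refine rowInsertRel_of_absorb (X := R ++ [x]) (u := []) (fun v hv hxv => absurd (hallx v hv) ?_)
    hxy hxc hcy ?_ ?_ (by simp [insertRow_of_forall_lt hallx])
  · rcases List.mem_append.1 hv with hv | hv
    · exact absurd (hall v hv) (by omega)
    · simp at hv; omega
  · rw [rowInsert_pair (insertRow_of_forall_lt hall) Prod.mk.eta.symm,
      insertRow_of_forall_lt hallx]
    simp
  · have hxR : x ∉ R ++ [y] := fun h => (List.mem_append.1 h).elim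
      (fun h => lt_irrefl x (hall x h)) fun h => by simp at h; omega
    rw [rowInsert_pair (insertRow_of_forall_lt fun r hr => by have := hall r hr; omega)
      (insertRow_of_isLeast hxR hl)]
    simp [map_ite_eq_of_notMem fun h => by have := hall y h; omega]

theorem rowInsertRel_swap_then_of_mem (hxR : x ∈ R) (hx1 : x + 1 ∉ R) (hxy : x + 1 < y)
    (hxc : x < c) (hcy : c ≤ y) :
    RowInsertRel (rowInsert R [x, y, c]) (rowInsert R [y, x, c]) := by
  have hUx := insertRow_insertRow_of_mem hxR (by omega : x < y)
  have hUR : ∀ v ∈ (insertRow R y).1, v = y ∨ v ∈ R := fun v => mem_of_mem_insertRow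
  rcases h : insertRow R y with ⟨U, o⟩
  rw [h] at hUx hUR
  rw [rowInsert_triple (insertRow_of_mem hxR) h Prod.mk.eta.symm,
    rowInsert_triple h hUx Prod.mk.eta.symm]
  cases o with
  | none => exact ⟨rfl, Or.inl (by simp)⟩
  | some w =>
    have hρ := intervalMin_le hxR
    obtain ⟨t, ht, htw⟩ := exists_insertRow_snd_le_of_insertRow_eq h hcy
    have hx1U : x + 1 ∉ U := fun hU => (hUR _ hU).elim (by omega) hx1
    have hxt : x + 1 < t := lt_of_insertRow_snd hx1U
      (fun v hv hcv => lt_of_le_of_ne (by omega) fun e => hx1U (e ▸ hv)) ht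
    have hxw : x + 1 < w := lt_of_insertRow_snd (c := y) hx1
      (fun v hv hyv => lt_of_le_of_ne (by omega) fun e => hx1 (e ▸ hv)) (by rw [h])
    simpa [ht] using rowInsertRel_of_lt_of_le (U := (insertRow U c).1)
      (by omega : intervalMin R x < t) htw (by omega)

theorem rowInsertRel_swap_then_of_comm (hxR : x ∉ R) (hm : IsLeast {r | r ∈ R ∧ x < r} m)
    (hmy : m < y) (hrun : y ∈ R → m + 1 < intervalMin R y) (hxc : x < c) (hcy : c ≤ y) :
    RowInsertRel (rowInsert R [x, y, c]) (rowInsert R [y, x, c]) := by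
  obtain ⟨U, hL, hR⟩ := insertRow_comm_of_isLeast hxR hm hmy hrun
  rw [insertRow_of_isLeast hxR hm] at hL
  rw [rowInsert_triple (insertRow_of_isLeast hxR hm) hL Prod.mk.eta.symm,
    rowInsert_triple Prod.mk.eta.symm hR Prod.mk.eta.symm]
  cases ho : (insertRow R y).2 with
  | none => exact ⟨rfl, Or.inl (by simp)⟩
  | some w =>
    rw [ho] at hL
    have hUT : ∀ v ∈ U, v = y ∨ v ∈ R.map (fun r => if r = m then x else r) :=
      fun v hv => mem_of_mem_insertRow (by rw [hL]; exact hv)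
    obtain ⟨t, ht, htw⟩ := exists_insertRow_snd_le_of_insertRow_eq hL hcy
    have hmt : m < t := lt_of_insertRow_snd
      (fun h => (hUT m h).elim (by omega) (notMem_map_ite_eq hm))
      (fun v hv hcv => (hUT v hv).elim (by omega) fun hv => lt_of_mem_map_ite_eq hm hv (by omega))
      ht
    have hmw : m + 1 < w := by
      by_cases hy : y ∈ R
      · rw [insertRow_of_mem hy] at ho
        cases ho
        exact hrun hy
      · have := (isLeast_of_insertRow_snd hy ho).1.2
        omega
    simpa [ht] using rowInsertRel_of_lt_of_le (U := (insertRow U c).1) hmt htw hmw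

theorem rowInsertRel_swap_then_of_intervalMin_le (hxR : x ∉ R)
    (hm : IsLeast {r | r ∈ R ∧ x < r} m) (hmy : m < y) (hy : y ∈ R)
    (hρ : intervalMin R y ≤ m + 1) (hxc : x < c) (hcy : c ≤ y) :
    RowInsertRel (rowInsert R [x, y, c]) (rowInsert R [y, x, c]) := by
  have hT := fun v => mem_map_ite_eq_of_lt (v := v) hm
  have hyT := (hT y hmy).2 hy
  have hρR : intervalMin R y = m := by
    refine le_antisymm (intervalMin_le_of_forall_mem hmy.le fun v h1 h2 => ?_)
      (hm.2 ⟨mem_of_intervalMin_le hy le_rfl (intervalMin_le hy),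
        lt_intervalMin hy (by have := hm.1.2; omega) hxR⟩)
    rcases h1.eq_or_lt with rfl | h1
    · exact hm.1.1
    · exact mem_of_intervalMin_le hy (by omega) h2
  have hρT : intervalMin (R.map (fun r => if r = m then x else r)) y = m + 1 :=
    intervalMin_eq (by omega)
      (fun v h1 h2 => (hT v (by omega)).2 (mem_of_intervalMin_le hy (by omega) h2))
      fun v hv => by rw [show v = m by omega]; exact notMem_map_ite_eq hm
  obtain ⟨t, ht, htρ⟩ := exists_insertRow_snd_le_intervalMin hyT hcy
  have hmt : m < t := lt_of_insertRow_snd (notMem_map_ite_eq hm)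
    (fun v hv hcv => lt_of_mem_map_ite_eq hm hv (by omega)) ht
  rw [rowInsert_triple (insertRow_of_isLeast hxR hm) (insertRow_of_mem hyT) Prod.mk.eta.symm,
    rowInsert_triple (insertRow_of_mem hy) (insertRow_of_isLeast hxR hm) Prod.mk.eta.symm, ht,
    hρT, hρR, show t = m + 1 by omega]
  exact ⟨rfl, Or.inr (Or.inr (by simpa using MicroMove.hecke m))⟩

theorem rowInsertRel_swap_then_of_isLeast_eq (hxR : x ∉ R) (hm : IsLeast {r | r ∈ R ∧ x < r} y)
    (hy1 : y + 1 ∉ R) (hxy : x + 1 < y) (hxc : x < c) (hcy : c ≤ y) :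
    RowInsertRel (rowInsert R [x, y, c]) (rowInsert R [y, x, c]) := by
  have hρ : intervalMin R y = y := intervalMin_self hm.1.1 fun v hv h => by
    have := hm.2 ⟨h, by omega⟩
    omega
  refine rowInsertRel_of_absorb (u := [y]) (fun v hv hxv => lt_of_mem_map_ite_eq hm hv hxv)
    hxy hxc hcy ?_ ?_ fun n hn => ?_
  · rw [rowInsert_pair (insertRow_of_isLeast hxR hm) Prod.mk.eta.symm]
    simp
  · rw [rowInsert_pair (insertRow_of_mem hm.1.1) (insertRow_of_isLeast hxR hm), hρ]
    simp
  · have hn' := isLeast_of_insertRow_snd (notMem_map_ite_eq hm) hn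
    have hnR := (mem_map_ite_eq_of_lt hm hn'.1.2).1 hn'.1.1
    exact .weak2 (lt_of_le_of_ne hn'.1.2 fun h => hy1 (h ▸ hnR))

theorem rowInsertRel_swap_then_of_lt_isLeast (hxR : x ∉ R) (hm : IsLeast {r | r ∈ R ∧ x < r} m)
    (hxy : x + 1 < y) (hym : y < m) (hxc : x < c) (hcy : c ≤ y) :
    RowInsertRel (rowInsert R [x, y, c]) (rowInsert R [y, x, c]) := by
  have hyR : y ∉ R := fun h => absurd (hm.2 ⟨h, by omega⟩) (by omega)
  have hmy : IsLeast {r | r ∈ R ∧ y < r} m := by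
    have : {r | r ∈ R ∧ y < r} = {r | r ∈ R ∧ x < r} := Set.ext fun r =>
      ⟨fun ⟨hr, hyr⟩ => ⟨hr, by omega⟩, fun ⟨hr, hxr⟩ => ⟨hr, by have := hm.2 ⟨hr, hxr⟩; omega⟩⟩
    rwa [this]
  have hmem := fun v => mem_map_ite_eq (x := y) (v := v) hm.1.1
  have hyx : IsLeast {r | r ∈ R.map (fun r => if r = m then y else r) ∧ x < r} y :=
    ⟨⟨(hmem y).2 (Or.inl rfl), by omega⟩, fun r ⟨hr, hxr⟩ => by
      rcases (hmem r).1 hr with rfl | ⟨hr, hne⟩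
      · exact le_rfl
      · have := hm.2 ⟨hr, hxr⟩; omega⟩
  refine rowInsertRel_of_absorb (u := [m]) (fun v hv hxv => by
      have := lt_of_mem_map_ite_eq hm hv hxv; omega) hxy hxc hcy ?_ ?_ fun q hq => ?_
  · rw [rowInsert_pair (insertRow_of_isLeast hxR hm) Prod.mk.eta.symm]
    simp
  · rw [rowInsert_pair (insertRow_of_isLeast hyR hmy) (insertRow_of_isLeast (fun h =>
      ((hmem x).1 h).elim (by omega) fun h => hxR h.1) hyx), List.map_map]
    refine Prod.ext (List.map_congr_left fun r hr => ?_) rfl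
    have hry : r ≠ y := fun h => hyR (h ▸ hr)
    by_cases hrm : r = m <;> simp [hrm, hry]
  · have hq' := isLeast_of_insertRow_snd
      (fun h => ((mem_map_ite_eq hm.1.1).1 h).elim (by omega) fun h => hyR h.1) hq
    exact .knuth2 hym (lt_of_mem_map_ite_eq hm hq'.1.1 (by have := hq'.1.2; omega))

theorem rowInsertRel_swap_then (hx : x ∈ R → x + 1 ∉ R) (hy : y ∈ R → y + 1 ∉ R)
    (hxy : x + 1 < y) (hxc : x < c) (hcy : c ≤ y) :
    RowInsertRel (rowInsert R [x, y, c]) (rowInsert R [y, x, c]) := by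
  rcases insertRow_cases R x with ⟨hall, -⟩ | ⟨hxR, -⟩ | ⟨hxR, m, hm, -⟩
  · exact rowInsertRel_swap_then_of_forall_lt hall hxy hxc hcy
  · exact rowInsertRel_swap_then_of_mem hxR (hx hxR) hxy hxc hcy
  rcases lt_trichotomy y m with hym | rfl | hmy
  · exact rowInsertRel_swap_then_of_lt_isLeast hxR hm hxy hym hxc hcy
  · exact rowInsertRel_swap_then_of_isLeast_eq hxR hm (hy hm.1.1) hxy hxc hcy
  by_cases hrun : y ∈ R → m + 1 < intervalMin R y
  · exact rowInsertRel_swap_then_of_comm hxR hm hmy hrun hxc hcy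
  push Not at hrun
  exact rowInsertRel_swap_then_of_intervalMin_le hxR hm hmy hrun.1 hrun.2 hxc hcy

end SwapThen

section MicroMove

variable {R s s' : List ℕ}

theorem rowInsertRel_of_microMove (h : MicroMove s s') (hR : R.Pairwise (· < ·))
    (hs : FullyCommutative (R ++ s)) : RowInsertRel (rowInsert R s) (rowInsert R s') := by
  have hs' := hs.of_heckeEquiv (h.heckeEquiv.append_left R)
  cases h with
  | knuth1 h₁ h₂ =>
    exact rowInsertRel_swap_then (hs.succ_notMem hR) (hs'.succ_notMem hR) (by omega) h₁ h₂.le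
  | knuth2 h₁ h₂ => exact rowInsertRel_cons_of_swapOutcome (swapOutcome_swap
      (mem_insertRow_self R _) (succ_notMem_insertRow (hs.succ_notMem hR)) h₁.le h₂)
  | weak1 h =>
    exact rowInsertRel_swap_then (hs.succ_notMem hR) (hs'.succ_notMem hR) h (by omega) le_rfl
  | weak2 h => exact rowInsertRel_cons_of_swapOutcome (swapOutcome_swap
      (mem_insertRow_self R _) (succ_notMem_insertRow (hs.succ_notMem hR)) le_rfl (by omega))
  | hecke x => exact rowInsertRel_cons_of_swapOutcome (swapOutcome_succ
      (mem_insertRow_self R x) (succ_notMem_insertRow (hs.succ_notMem hR)))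

end MicroMove

section Tableau

variable {T : List (List ℕ)}

theorem rowWord_cons (R : List ℕ) (T : List (List ℕ)) : rowWord (R :: T) = rowWord T ++ R := by
  simp [rowWord]

theorem insertTab_cons (R : List ℕ) (T : List (List ℕ)) (x : ℕ) :
    insertTab (R :: T) x = (insertRow R x).1 :: (insertRow R x).2.toList.foldl insertTab T := by
  rw [insertTab]
  cases (insertRow R x).2 <;> rfl

theorem foldl_insertTab_cons (R : List ℕ) (T : List (List ℕ)) (s : List ℕ) :
    s.foldl insertTab (R :: T) = (rowInsert R s).1 :: (rowInsert R s).2.foldl insertTab T := by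
  induction s generalizing R T with
  | nil => rfl
  | cons x s ih => simp [insertTab_cons, ih, rowInsert]

theorem foldl_insertTab_nil (x : ℕ) (s : List ℕ) :
    (x :: s).foldl insertTab [] = (x :: s).foldl insertTab [[]] := by
  simp [insertTab, insertRow_of_forall_lt]

theorem insertTab_pairwise (hT : ∀ R ∈ T, R.Pairwise (· < ·)) (x : ℕ) :
    ∀ R ∈ insertTab T x, R.Pairwise (· < ·) := by
  induction T generalizing x with
  | nil => simp [insertTab]
  | cons R T ih =>
    rw [insertTab_cons]
    intro S hS
    rcases List.mem_cons.1 hS with rfl | hS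
    · exact insertRow_pairwise (hT R List.mem_cons_self) x
    · cases ho : (insertRow R x).2 with
      | none => exact hT S (List.mem_cons_of_mem _ (by simpa [ho] using hS))
      | some y =>
        exact ih (fun S hS => hT S (List.mem_cons_of_mem _ hS)) y S (by simpa [ho] using hS)

theorem foldl_insertTab_pairwise (hT : ∀ R ∈ T, R.Pairwise (· < ·)) (u : List ℕ) :
    ∀ R ∈ u.foldl insertTab T, R.Pairwise (· < ·) := by
  induction u generalizing T with
  | nil => exact hT
  | cons x u ih => exact ih (insertTab_pairwise hT x)

theorem heckeEquiv_rowWord_insertTab {x : ℕ} (hT : ∀ R ∈ T, R.Pairwise (· < ·))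
    (h : FullyCommutative (rowWord T ++ [x])) :
    HeckeEquiv (rowWord T ++ [x]) (rowWord (insertTab T x)) := by
  induction T generalizing x with
  | nil => simpa [insertTab, rowWord] using HeckeEquiv.refl [x]
  | cons R T ih =>
    have hR := hT R List.mem_cons_self
    rw [rowWord_cons] at h
    have hRx : FullyCommutative (R ++ [x]) := (by simpa using h : FullyCommutative
      (rowWord T ++ (R ++ [x]))).of_append_right
    have e : HeckeEquiv (rowWord T ++ R ++ [x])
        (rowWord T ++ (insertRow R x).2.toList ++ (insertRow R x).1) := by
      simpa using (heckeEquiv_insertRow hR (hRx.succ_notMem hR)).append_left (rowWord T)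
    rw [insertTab_cons, rowWord_cons, rowWord_cons]
    refine e.trans (HeckeEquiv.append_right _ ?_)
    cases ho : (insertRow R x).2 with
    | none => simpa using HeckeEquiv.refl _
    | some y =>
      have hFC := h.of_heckeEquiv e
      rw [ho] at hFC
      exact ih (fun S hS => hT S (List.mem_cons_of_mem _ hS)) hFC.of_append_left

theorem heckeEquiv_rowWord_foldl_insertTab {u : List ℕ} (hT : ∀ R ∈ T, R.Pairwise (· < ·))
    (h : FullyCommutative (rowWord T ++ u)) :
    HeckeEquiv (rowWord T ++ u) (rowWord (u.foldl insertTab T)) := by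
  induction u generalizing T with
  | nil => simpa using HeckeEquiv.refl _
  | cons x u ih =>
    have h' : FullyCommutative (rowWord T ++ [x] ++ u) := by simpa using h
    have e := (heckeEquiv_rowWord_insertTab hT h'.of_append_left).append_right u
    rw [List.append_assoc] at e
    exact e.trans (ih (insertTab_pairwise hT x) (by simpa using h.of_heckeEquiv e))

end Tableau

section Main

variable {T : List (List ℕ)} {s s' w w' : List ℕ}

theorem foldl_insertTab_nil_eq_of_microMove (h : MicroMove s s') (hs : FullyCommutative s) :
    s.foldl insertTab [] = s'.foldl insertTab [] := by
  obtain ⟨a, t, rfl⟩ : ∃ a t, s = a :: t := by cases h <;> exact ⟨_, _, rfl⟩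
  obtain ⟨b, t', rfl⟩ : ∃ b t', s' = b :: t' := by cases h <;> exact ⟨_, _, rfl⟩
  obtain ⟨hrow, hout⟩ := rowInsertRel_of_microMove h List.Pairwise.nil hs
  -- The first letter opens the row without bumping, so fewer than three letters are bumped.
  have hlen : (rowInsert [] (a :: t)).2.length < 3 := by
    have h₁ := length_rowInsert_snd_le [a] t
    have h₂ := h.length_eq.1
    simp only [List.length_cons] at h₂
    have e : insertRow [] a = ([a], none) := insertRow_of_forall_lt (by simp)
    simp only [rowInsert, e, Option.toList_none, List.nil_append]
    omega
  have hout' : (rowInsert [] (a :: t)).2 = (rowInsert [] (b :: t')).2 := by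
    rcases hout with hout | hout | hout
    · exact hout
    · exact absurd hout.length_eq.1 hlen.ne
    · exact absurd hout.length_eq.2 hlen.ne
  rw [foldl_insertTab_nil, foldl_insertTab_nil, foldl_insertTab_cons, foldl_insertTab_cons, hrow,
    hout']

theorem foldl_insertTab_eq_of_microMove (h : MicroMove s s') (hT : ∀ R ∈ T, R.Pairwise (· < ·))
    (hs : FullyCommutative (rowWord T ++ s)) : s.foldl insertTab T = s'.foldl insertTab T := by
  induction T generalizing s s' with
  | nil => exact foldl_insertTab_nil_eq_of_microMove h (by simpa [rowWord] using hs)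
  | cons R T ih =>
    have hR := hT R List.mem_cons_self
    have hT' : ∀ S ∈ T, S.Pairwise (· < ·) := fun S hS => hT S (List.mem_cons_of_mem _ hS)
    rw [rowWord_cons, List.append_assoc] at hs
    obtain ⟨hrow, hout⟩ := rowInsertRel_of_microMove h hR hs.of_append_right
    have hFC : FullyCommutative (rowWord T ++ (rowInsert R s).2) := by
      have e := (heckeEquiv_rowInsert hR hs.of_append_right).append_left (rowWord T)
      exact (by simpa using hs.of_heckeEquiv e : FullyCommutative
        (rowWord T ++ (rowInsert R s).2 ++ (rowInsert R s).1)).of_append_left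
    rw [foldl_insertTab_cons, foldl_insertTab_cons, hrow]
    rcases hout with hout | hout | hout
    · rw [hout]
    · rw [ih hout hT' hFC]
    · rw [ih hout hT' (hFC.of_heckeEquiv (hout.heckeEquiv.symm.append_left _))]

theorem MicroStep.exists_microMove (h : MicroStep w w') :
    ∃ u s s' v, w = u ++ s ++ v ∧ w' = u ++ s' ++ v ∧ MicroMove s s' := by
  cases h with
  | knuth1 u v x y z h₁ h₂ => exact ⟨u, _, _, v, by simp, by simp, .knuth1 h₁ h₂⟩
  | knuth2 u v x y z h₁ h₂ => exact ⟨u, _, _, v, by simp, by simp, .knuth2 h₁ h₂⟩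
  | weak1 u v x y h => exact ⟨u, _, _, v, by simp, by simp, .weak1 h⟩
  | weak2 u v x y h => exact ⟨u, _, _, v, by simp, by simp, .weak2 h⟩
  | heckeIII u v x => exact ⟨u, _, _, v, by simp, by simp, .hecke x⟩

theorem MicroStep.heckeEquiv (h : MicroStep w w') : HeckeEquiv w w' := by
  obtain ⟨u, s, s', v, rfl, rfl, hm⟩ := h.exists_microMove
  exact (hm.heckeEquiv.append_left u).append_right v

theorem MicroEquiv.heckeEquiv (h : MicroEquiv w w') : HeckeEquiv w w' := by
  induction h with
  | rel _ _ h => exact h.heckeEquiv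
  | refl w => exact .refl w
  | symm _ _ _ ih => exact ih.symm
  | trans _ _ _ _ _ ih₁ ih₂ => exact ih₁.trans ih₂

theorem foldl_insertTab_eq_of_microStep (h : MicroStep w w') (hw : FullyCommutative w) :
    w.foldl insertTab [] = w'.foldl insertTab [] := by
  obtain ⟨u, s, s', v, rfl, rfl, hm⟩ := h.exists_microMove
  have hus : FullyCommutative (u ++ s) := hw.of_append_left
  have hT := heckeEquiv_rowWord_foldl_insertTab (T := []) (u := u) (by simp)
    (by simpa [rowWord] using hus.of_append_left)
  simp only [List.foldl_append]
  rw [foldl_insertTab_eq_of_microMove hm (foldl_insertTab_pairwise (by simp) u)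
    (hus.of_heckeEquiv (by simpa [rowWord] using hT.append_right s))]

theorem foldl_insertTab_eq_of_microEquiv (h : MicroEquiv w w') (hw : FullyCommutative w) :
    w.foldl insertTab [] = w'.foldl insertTab [] := by
  induction h with
  | rel _ _ h => exact foldl_insertTab_eq_of_microStep h hw
  | refl => rfl
  | symm _ _ h ih => exact (ih (hw.of_heckeEquiv (MicroEquiv.heckeEquiv h).symm)).symm
  | trans _ _ _ h _ ih₁ ih₂ =>
    exact (ih₁ hw).trans (ih₂ (hw.of_heckeEquiv (MicroEquiv.heckeEquiv h)))

end Main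

theorem microEquiv_same_insertion_tableau_general (w1 w2 : List ℕ)
    (h1 : FullyCommutative w1)
    (hrev : MicroEquiv w1.reverse w2.reverse) :
    starPTab w1 = starPTab w2 :=
  foldl_insertTab_eq_of_microEquiv hrev h1.reverse

/-- If two fully-commutative 0-Hecke words have reverse words that are
equivalent under the micro-moves, then they have the same `⋆`-insertion tableau
(inserting from right to left). -/
theorem microEquiv_same_insertion_tableau (w1 w2 : List ℕ)
    (h1 : FullyCommutative w1) (h2 : FullyCommutative w2)
    (hrev : MicroEquiv w1.reverse w2.reverse) :
    starPTab w1 = starPTab w2 :=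
  microEquiv_same_insertion_tableau_general w1 w2 h1 hrev
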